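/- arXiv:2510.07007 — 6 statements merged into one kernel-verified Lean document; each statement's English description precedes it below -/
import Mathlib

section
/- Let d ≥ 3 be an integer and let α_d be the largest real root of x³ - (d-2)x² - 2dx + d - 1 = 0. Then d - 1/(d+4) > α_d. -/
theorem stmt0 (d : ℕ) (hd : 3 ≤ d) (α : ℝ)
    (hroot : α ^ 3 - ((d : ℝ) - 2) * α ^ 2 - 2 * d * α + d - 1 = 0)
    (hmax : ∀ x : ℝ, x ^ 3 - ((d : ℝ) - 2) * x ^ 2 - 2 * d * x + d - 1 = 0 → x ≤ α) :
    (d : ℝ) - 1 / (d + 4) > α := by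
  by_contra h
  push_neg at h
  have hD : (3:ℝ) ≤ (d:ℝ) := by exact_mod_cast hd
  have he : (0:ℝ) < (d:ℝ) + 4 := by linarith
  have he' : ((d:ℝ) + 4) ≠ 0 := ne_of_gt he
  obtain ⟨t, ht, hα⟩ : ∃ t : ℝ, 0 ≤ t ∧ α = (d:ℝ) - 1/((d:ℝ)+4) + t :=
    ⟨α - ((d:ℝ) - 1/((d:ℝ)+4)), by linarith, by ring⟩
  rw [hα] at hroot
  field_simp at hroot
  have key2 : (((d:ℝ)^3 + 6*d^2 - 6*d - 57)
      + t*((d:ℝ)+4)*((((d:ℝ)^2+2*d))*((d:ℝ)+4)^2 - (4*d+4)*((d:ℝ)+4) + 3)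
      + t^2*((d:ℝ)+4)^2*((2*d+2)*((d:ℝ)+4) - 3)
      + t^3*((d:ℝ)+4)^3) * ((d:ℝ)+4)^3 = 0 := by linear_combination ((d:ℝ)+4)^3 * hroot
  have he3 : ((d:ℝ)+4)^3 ≠ 0 := pow_ne_zero _ he'
  have key := (mul_eq_zero.mp key2).resolve_right he3
  have hA : (0:ℝ) < (d:ℝ)^3 + 6*d^2 - 6*d - 57 := by nlinarith
  have hB : (0:ℝ) < (((d:ℝ)^2+2*d))*((d:ℝ)+4)^2 - (4*d+4)*((d:ℝ)+4) + 3 := by nlinarith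
  have hC : (0:ℝ) < (2*(d:ℝ)+2)*((d:ℝ)+4) - 3 := by nlinarith
  have h1 : 0 ≤ t*((d:ℝ)+4)*((((d:ℝ)^2+2*d))*((d:ℝ)+4)^2 - (4*d+4)*((d:ℝ)+4) + 3) := by positivity
  have h2 : 0 ≤ t^2*((d:ℝ)+4)^2*((2*(d:ℝ)+2)*((d:ℝ)+4) - 3) := by positivity
  have h3 : 0 ≤ t^3*((d:ℝ)+4)^3 := by positivity
  linarith [key, hA, h1, h2, h3]
end

section
/- For an odd integer d ≥ 1, the spectral radius of the graph (K₁ ∪ K₂) ∨ complement((d-1)/2 · K₂) equals the largest root of x³ - (d-2)x² - 2dx + d - 1 = 0. -/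
open scoped Classical

/-- The vertex type of `(K₁ ∪ K₂) ∨ complement(((d-1)/2) • K₂)`: three vertices for
`K₁ ∪ K₂` and `d - 1` vertices for the cocktail party graph. -/
abbrev JoinVert (d : ℕ) := Fin 3 ⊕ Fin (d - 1)

/-- The graph `(K₁ ∪ K₂) ∨ complement(((d-1)/2) • K₂)`: on the left part, vertices `1` and `2`
form a `K₂` and `0` is isolated; on the right part, we have the cocktail party graph
(complement of a perfect matching pairing `2k` with `2k+1`); all cross edges are present. -/
def JoinGraph (d : ℕ) : SimpleGraph (JoinVert d) :=
  SimpleGraph.fromRel fun a b =>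
    match a, b with
    | .inl x, .inl y => x ≠ 0 ∧ y ≠ 0
    | .inr i, .inr j => (i : ℕ) / 2 ≠ (j : ℕ) / 2
    | _, _ => True

/-- `μ` is an eigenvalue of the real matrix `M`. -/
def HasEig {n : Type*} [Fintype n] (M : Matrix n n ℝ) (μ : ℝ) : Prop :=
  ∃ v : n → ℝ, v ≠ 0 ∧ M.mulVec v = μ • v

/-- The adjacency matrix of `JoinGraph d`. -/
noncomputable def JoinAdj (d : ℕ) : Matrix (JoinVert d) (JoinVert d) ℝ :=
  fun a b => if (JoinGraph d).Adj a b then 1 else 0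

/-!
The vertex 0, the edge {1, 2} and the cocktail party part form an equitable partition with
quotient matrix `Q = [[0, 0, d-1], [0, 1, d-1], [1, 2, d-3]]`, whose characteristic polynomial is
the cubic: on vectors constant on the three parts (`blockVec`) the adjacency matrix acts as `Q`.
For `d ≥ 3` the largest root `α` exceeds 1, so the eigenvector of `Q` for `α` lifts to a positive
eigenvector of the adjacency matrix, and a nonnegative matrix with a positive eigenvector has its
eigenvalue as spectral radius (Collatz–Wielandt). For `d = 1` the graph is `K₁ ∪ K₂` and `α = 1`.
-/

open Matrix

section CollatzWielandt

variable {n : Type*} [Fintype n]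

theorem abs_le_of_hasEig_of_subeigenvector {M : Matrix n n ℝ} (hM : ∀ i j, 0 ≤ M i j)
    {w : n → ℝ} (hw : ∀ i, 0 < w i) {α : ℝ} (hMw : M *ᵥ w ≤ α • w)
    {μ : ℝ} (hμ : HasEig M μ) : |μ| ≤ α := by
  obtain ⟨v, hv, hMv⟩ := hμ
  obtain ⟨i, hi⟩ : ∃ i, v i ≠ 0 := by simpa [funext_iff] using hv
  have : Nonempty n := ⟨i⟩
  obtain ⟨k, hk⟩ := Finite.exists_max fun j => |v j| / w j
  set t := |v k| / w k
  have hvt : ∀ j, |v j| ≤ t * w j := fun j => (div_le_iff₀ (hw j)).mp (hk j)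
  have ht : 0 < t := (div_pos (abs_pos.mpr hi) (hw i)).trans_le (hk i)
  have hvk : |v k| = t * w k := (div_mul_cancel₀ _ (hw k).ne').symm
  refine le_of_mul_le_mul_right ?_ (hvk ▸ mul_pos ht (hw k))
  calc |μ| * |v k| = |∑ j, M k j * v j| := by
        rw [← abs_mul, ← smul_eq_mul, ← Pi.smul_apply, ← hMv]; rfl
    _ ≤ ∑ j, M k j * (t * w j) := by
        refine (Finset.abs_sum_le_sum_abs _ _).trans (Finset.sum_le_sum fun j _ => ?_)
        rw [abs_mul, abs_of_nonneg (hM k j)]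
        exact mul_le_mul_of_nonneg_left (hvt j) (hM k j)
    _ = t * (M *ᵥ w) k := by
        simp only [Matrix.mulVec, dotProduct, Finset.mul_sum]
        exact Finset.sum_congr rfl fun j _ => by ring
    _ ≤ t * (α * w k) := mul_le_mul_of_nonneg_left (hMw k) ht.le
    _ = α * |v k| := by rw [hvk]; ring

theorem hasEig_and_le_of_pos_eigenvector [Nonempty n] {M : Matrix n n ℝ} (hM : ∀ i j, 0 ≤ M i j)
    {w : n → ℝ} (hw : ∀ i, 0 < w i) {α : ℝ} (hMw : M *ᵥ w = α • w) :
    HasEig M α ∧ ∀ μ, HasEig M μ → μ ≤ α := by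
  refine ⟨⟨w, ?_, hMw⟩, fun μ hμ => (le_abs_self μ).trans ?_⟩
  · obtain ⟨i⟩ := ‹Nonempty n›
    exact fun h => (hw i).ne' (congrFun h i)
  · exact abs_le_of_hasEig_of_subeigenvector hM hw hMw.le hμ

end CollatzWielandt

namespace JoinGraph

variable {d : ℕ}

@[simp] lemma adj_inl_inl (x y : Fin 3) :
    (JoinGraph d).Adj (.inl x) (.inl y) ↔ x ≠ y ∧ x ≠ 0 ∧ y ≠ 0 := by
  simp only [JoinGraph, SimpleGraph.fromRel_adj]
  grind

@[simp] lemma adj_inl_inr (x : Fin 3) (j : Fin (d - 1)) : (JoinGraph d).Adj (.inl x) (.inr j) := by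
  simp [JoinGraph]

@[simp] lemma adj_inr_inl (j : Fin (d - 1)) (x : Fin 3) : (JoinGraph d).Adj (.inr j) (.inl x) := by
  simp [JoinGraph]

@[simp] lemma adj_inr_inr (i j : Fin (d - 1)) :
    (JoinGraph d).Adj (.inr i) (.inr j) ↔ (i : ℕ) / 2 ≠ (j : ℕ) / 2 := by
  simp only [JoinGraph, SimpleGraph.fromRel_adj, ne_eq, Sum.inr.injEq, Fin.ext_iff]
  grind

end JoinGraph

lemma joinAdj_nonneg (d : ℕ) (a b : JoinVert d) : 0 ≤ JoinAdj d a b := by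
  unfold JoinAdj; split_ifs <;> norm_num

open Finset in
lemma card_filter_div_two_eq {m : ℕ} (hm : Even m) (i : Fin m) :
    #{j : Fin m | (i : ℕ) / 2 = (j : ℕ) / 2} = 2 := by
  obtain ⟨r, rfl⟩ := hm
  have hi := i.2
  rw [card_eq_two]
  refine ⟨⟨2 * (i / 2), by omega⟩, ⟨2 * (i / 2) + 1, by omega⟩, by simp, ?_⟩
  ext j
  simp only [mem_filter, mem_univ, true_and, mem_insert, Fin.ext_iff, mem_singleton]
  omega

open Finset in
lemma card_filter_div_two_ne_add_two {m : ℕ} (hm : Even m) (i : Fin m) :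
    #{j : Fin m | (i : ℕ) / 2 ≠ (j : ℕ) / 2} + 2 = m := by
  simpa [card_filter_div_two_eq hm i, add_comm] using
    card_filter_add_card_filter_not (s := univ) fun j : Fin m => (i : ℕ) / 2 = (j : ℕ) / 2

def blockVec (d : ℕ) (x y z : ℝ) : JoinVert d → ℝ := Sum.elim ![x, y, y] fun _ => z

open Finset in
lemma joinAdj_mulVec_blockVec {d : ℕ} (hd : Odd d) (x y z : ℝ) :
    JoinAdj d *ᵥ blockVec d x y z
      = blockVec d ((d - 1) * z) (y + (d - 1) * z) (x + 2 * y + (d - 3) * z) := by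
  have hcast : ((d - 1 : ℕ) : ℝ) = d - 1 := by
    rw [Nat.cast_sub hd.pos]; norm_num
  funext a
  rcases a with u | i
  · fin_cases u <;>
      simp [Matrix.mulVec, dotProduct, JoinAdj, blockVec, Fintype.sum_sum_type, Fin.sum_univ_three, hcast]
  · have hcard : (#{j : Fin (d - 1) | (i : ℕ) / 2 ≠ (j : ℕ) / 2} : ℝ) = d - 3 := by
      have := congrArg (Nat.cast : ℕ → ℝ) (card_filter_div_two_ne_add_two (by grind) i)
      push_cast [hcast] at this
      linarith
    simp only [Matrix.mulVec, dotProduct, JoinAdj, blockVec, Fintype.sum_sum_type, Fin.sum_univ_three]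
    simp [sum_ite, hcard, two_mul, add_assoc]

lemma blockVec_pos {d : ℕ} {x y z : ℝ} (hx : 0 < x) (hy : 0 < y) (hz : 0 < z) (a : JoinVert d) :
    0 < blockVec d x y z a := by
  rcases a with u | i
  · fin_cases u <;> assumption
  · exact hz

lemma blockVec_ne_zero {d : ℕ} {x y z : ℝ} (hy : y ≠ 0) : blockVec d x y z ≠ 0 :=
  fun h => hy (congrFun h (.inl 1))

lemma blockVec_mono {d : ℕ} {x y z x' y' z' : ℝ} (hx : x ≤ x') (hy : y ≤ y') (hz : z ≤ z') :
    blockVec d x y z ≤ blockVec d x' y' z' := by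
  rintro (u | i)
  · fin_cases u <;> assumption
  · exact hz

lemma smul_blockVec (d : ℕ) (c x y z : ℝ) :
    c • blockVec d x y z = blockVec d (c * x) (c * y) (c * z) := by
  funext a
  rcases a with u | i
  · fin_cases u <;> rfl
  · rfl

lemma exists_cubic_root_gt_one {D : ℝ} (hD : 1 < D) :
    ∃ x : ℝ, 1 < x ∧ x ^ 3 - (D - 2) * x ^ 2 - 2 * D * x + D - 1 = 0 := by
  obtain ⟨x, ⟨hx1, -⟩, hx⟩ := intermediate_value_Icc (show (1 : ℝ) ≤ D + 1 by linarith)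
    (f := fun x => x ^ 3 - (D - 2) * x ^ 2 - 2 * D * x + D - 1) (by fun_prop)
    (show (0 : ℝ) ∈ Set.Icc _ _ by constructor <;> nlinarith)
  refine ⟨x, hx1.lt_of_ne ?_, hx⟩
  rintro rfl
  simp only at hx
  linarith

theorem stmt3_general (d : ℕ) (hodd : Odd d) (α : ℝ)
    (hroot : α ^ 3 - ((d : ℝ) - 2) * α ^ 2 - 2 * d * α + d - 1 = 0)
    (hmax : ∀ x : ℝ, x ^ 3 - ((d : ℝ) - 2) * x ^ 2 - 2 * d * x + d - 1 = 0 → x ≤ α) :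
    HasEig (JoinAdj d) α ∧ ∀ μ : ℝ, HasEig (JoinAdj d) μ → μ ≤ α := by
  obtain rfl | hd3 : d = 1 ∨ 3 ≤ d := by obtain ⟨k, rfl⟩ := hodd; omega
  · obtain rfl : α = 1 := by
      have h1 : 1 ≤ α := hmax 1 (by norm_num)
      have hfac : α * (α + 2) * (α - 1) = 0 := by push_cast at hroot; linear_combination hroot
      linarith [(mul_eq_zero.mp hfac).resolve_left (mul_pos (by linarith) (by linarith)).ne']
    -- The cocktail party part is empty; `(0, 1, 2/3)` is the eigenvector of `Q` for 1.
    refine ⟨⟨blockVec 1 0 1 (2 / 3), blockVec_ne_zero one_ne_zero, ?_⟩, fun μ hμ => ?_⟩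
    · rw [joinAdj_mulVec_blockVec hodd, smul_blockVec]
      norm_num
    · refine (le_abs_self μ).trans (abs_le_of_hasEig_of_subeigenvector (joinAdj_nonneg 1)
        (blockVec_pos one_pos one_pos one_pos) ?_ hμ)
      rw [joinAdj_mulVec_blockVec hodd, smul_blockVec]
      exact blockVec_mono (by norm_num) (by norm_num) (by norm_num)
  · have hD : (1 : ℝ) < d := by exact_mod_cast (show 1 < d by omega)
    obtain ⟨x, hx1, hx⟩ := exists_cubic_root_gt_one hD
    have hα : 1 < α := hx1.trans_le (hmax x hx)
    refine hasEig_and_le_of_pos_eigenvector (joinAdj_nonneg d)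
      (blockVec_pos (x := (d - 1) * (α - 1)) (y := (d - 1) * α) (z := α * (α - 1))
        (by nlinarith) (by nlinarith) (by nlinarith)) ?_
    rw [joinAdj_mulVec_blockVec hodd, smul_blockVec]
    congr 1
    · ring
    · ring
    · linear_combination -hroot

theorem stmt3 (d : ℕ) (hd : 1 ≤ d) (hodd : Odd d) (α : ℝ)
    (hroot : α ^ 3 - ((d : ℝ) - 2) * α ^ 2 - 2 * d * α + d - 1 = 0)
    (hmax : ∀ x : ℝ, x ^ 3 - ((d : ℝ) - 2) * x ^ 2 - 2 * d * x + d - 1 = 0 → x ≤ α) :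
    HasEig (JoinAdj d) α ∧ ∀ μ : ℝ, HasEig (JoinAdj d) μ → μ ≤ α :=
  stmt3_general d hodd α hroot hmax
end

section
/- Let G be a connected d-regular graph, S a nonempty vertex subset, and H a component of G - S with e(S,H) < ⌈d/b⌉, where b ≥ 1 is an integer. Then H has at least 2 vertices and |V(H)| ≥ d + 1. -/
/-- `H` is (the vertex set of) a connected component of `G - S`. -/
def IsCompOf {V : Type*} (G : SimpleGraph V) (S H : Finset V) : Prop :=
  H.Nonempty ∧ Disjoint H S ∧ (G.induce (H : Set V)).Connected ∧
    ∀ x ∈ H, ∀ y, y ∉ H → y ∉ S → ¬ G.Adj x y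

/-- The number of edges of `G` between `S` and `H`. -/
def eSH {V : Type*} [DecidableEq V] (G : SimpleGraph V) [DecidableRel G.Adj]
    (S H : Finset V) : ℕ :=
  ((S ×ˢ H).filter fun p => G.Adj p.1 p.2).card

theorem stmt5 {V : Type*} [Fintype V] [DecidableEq V]
    (G : SimpleGraph V) [DecidableRel G.Adj] (d b : ℕ) (hb : 1 ≤ b)
    (hG : G.Connected) (hreg : G.IsRegularOfDegree d)
    (S H : Finset V) (hS : S.Nonempty) (hH : IsCompOf G S H)
    (he : eSH G S H < Nat.ceil ((d : ℚ) / b)) :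
    2 ≤ H.card ∧ d + 1 ≤ H.card := by
  obtain ⟨hHne, hdisj, hconn, hclosed⟩ := hH
  have hd1 : 1 ≤ d := by
    by_contra h
    push_neg at h
    interval_cases d
    norm_num at he
  have hceil : Nat.ceil ((d : ℚ) / b) ≤ d := by
    apply Nat.ceil_le.mpr
    rw [div_le_iff₀ (by positivity)]
    have hb' : (1:ℚ) ≤ b := by exact_mod_cast hb
    nlinarith [Nat.cast_nonneg (α := ℚ) d]
  have hed : eSH G S H < d := lt_of_lt_of_le he hceil
  -- per-vertex bound
  have key : ∀ v ∈ H, d + 1 ≤ (S.filter (fun s => G.Adj s v)).card + H.card := by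
    intro v hv
    have hsub : G.neighborFinset v ⊆ (H.erase v) ∪ (S.filter (fun s => G.Adj s v)) := by
      intro y hy
      rw [SimpleGraph.mem_neighborFinset] at hy
      by_cases hyH : y ∈ H
      · exact Finset.mem_union_left _ (Finset.mem_erase.mpr ⟨(G.ne_of_adj hy).symm, hyH⟩)
      · by_cases hyS : y ∈ S
        · exact Finset.mem_union_right _ (Finset.mem_filter.mpr ⟨hyS, hy.symm⟩)
        · exact absurd hy (hclosed v hv y hyH hyS)
    have h1 := Finset.card_le_card hsub
    rw [SimpleGraph.card_neighborFinset_eq_degree, hreg v] at h1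
    have h2 := Finset.card_union_le (H.erase v) (S.filter (fun s => G.Adj s v))
    have h3 : (H.erase v).card + 1 = H.card := Finset.card_erase_add_one hv
    omega
  -- eSH as a sum over H
  have hsum : eSH G S H = ∑ v ∈ H, (S.filter (fun s => G.Adj s v)).card := by
    unfold eSH
    rw [Finset.card_eq_sum_card_fiberwise (f := Prod.snd) (t := H)
      (fun p hp => ((Finset.mem_product.mp (Finset.mem_filter.mp hp).1).2))]
    apply Finset.sum_congr rfl
    intro v hv
    apply Finset.card_nbij' (fun p => p.1) (fun s => (s, v))
    · intro p hp
      simp only [Finset.mem_coe, Finset.mem_filter, Finset.mem_product] at hp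
      obtain ⟨⟨⟨hp1, _⟩, hadj⟩, hp2⟩ := hp
      simp only [Finset.mem_coe, Finset.mem_filter]
      exact ⟨hp1, hp2 ▸ hadj⟩
    · intro s hs
      simp only [Finset.mem_coe, Finset.mem_filter] at hs
      simp only [Finset.mem_coe, Finset.mem_filter, Finset.mem_product]
      exact ⟨⟨⟨hs.1, hv⟩, hs.2⟩, trivial⟩
    · intro p hp
      simp only [Finset.mem_coe, Finset.mem_filter, Finset.mem_product] at hp
      exact Prod.ext rfl hp.2.symm
    · intro s hs
      rfl
  have hk1 : 1 ≤ H.card := Finset.card_pos.mpr hHne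
  have hk : d + 1 ≤ H.card := by
    by_contra hk
    push_neg at hk
    have hbound : ∀ v ∈ H, d + 1 - H.card ≤ (S.filter (fun s => G.Adj s v)).card := by
      intro v hv
      have := key v hv
      omega
    have hs2 : ∑ _v ∈ H, (d + 1 - H.card) ≤ ∑ v ∈ H, (S.filter (fun s => G.Adj s v)).card :=
      Finset.sum_le_sum hbound
    rw [Finset.sum_const, smul_eq_mul] at hs2
    have hd' : d ≤ H.card * (d + 1 - H.card) := by
      obtain ⟨m, hm⟩ : ∃ m, d + 1 - H.card = m + 1 := ⟨d - H.card, by omega⟩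
      rw [hm]
      have : m ≤ H.card * m := Nat.le_mul_of_pos_left m hk1
      calc d = m + H.card := by omega
        _ ≤ H.card * m + H.card := by omega
        _ = H.card * (m + 1) := by ring
    omega
  omega
end

section
/- Let G be a connected d-regular graph with d even, and suppose S ⊆ V(G) is a set with c(G-S) ≥ b|S| + 1 where b ≥ 1 is an integer and ⌈d/b⌉ = 2. Then a contradiction arises; i.e., if d is even and d ≤ 2b, no set S satisfies c(G-S) ≥ b|S| + 1 with |S| ≥ 1. Equivalently: if d is even and b < d ≤ 2b, then every component H of G - S receives an even number e(S,H) ≥ 2 of edges from S, forcing sd ≥ 2c(G-S) ≥ 2(b|S|+1) > sd. -/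
open Finset

/-- In a graph, if a set is closed under adjacency, it is closed under walks. -/
private lemma stmt7_walkClosed {V : Type*} {G : SimpleGraph V} {A : Set V}
    (hA : ∀ ⦃x y : V⦄, x ∈ A → G.Adj x y → y ∈ A) :
    ∀ {u v : V}, G.Walk u v → u ∈ A → v ∈ A
  | _, _, SimpleGraph.Walk.nil, hu => hu
  | _, _, SimpleGraph.Walk.cons h p, hu => stmt7_walkClosed hA p (hA hu h)

theorem stmt7 {V : Type*} [Fintype V] (G : SimpleGraph V) [DecidableRel G.Adj] (d b : ℕ) (hb : 1 ≤ b)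
    (hG : G.Connected) (hreg : G.IsRegularOfDegree d) (hdeven : Even d)
    (h1 : b < d) (h2 : d ≤ 2 * b) :
    ¬ ∃ S : Finset V, S.Nonempty ∧
      Nat.card (G.induce ((↑S)ᶜ : Set V)).ConnectedComponent ≥ b * S.card + 1 := by
  classical
  rintro ⟨S, hSne, hcomp⟩
  set G' := G.induce ((↑S)ᶜ : Set V) with hG'def
  letI : Fintype ((↑S)ᶜ : Set V) := Fintype.ofFinite _
  letI : Fintype G'.ConnectedComponent := Fintype.ofFinite _
  -- vertex set of a component, as a finset of V
  set W : G'.ConnectedComponent → Finset V :=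
    fun K => univ.filter (fun v => ∃ h : v ∈ ((↑S)ᶜ : Set V), G'.connectedComponentMk ⟨v, h⟩ = K)
    with hWdef
  have hWmem : ∀ {K v}, v ∈ W K ↔
      ∃ h : v ∈ ((↑S)ᶜ : Set V), G'.connectedComponentMk ⟨v, h⟩ = K := by
    intro K v; simp [hWdef]
  have hWS : ∀ {K v}, v ∈ W K → v ∉ S := by
    rintro K v hv
    obtain ⟨h, -⟩ := hWmem.mp hv
    simpa using h
  -- closure of a component under adjacency avoiding S
  have hclosed : ∀ {K v u}, v ∈ W K → G.Adj v u → u ∉ S → u ∈ W K := by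
    rintro K v u hv hadj huS
    obtain ⟨h, hK⟩ := hWmem.mp hv
    have hu : u ∈ ((↑S)ᶜ : Set V) := by simpa using huS
    refine hWmem.mpr ⟨hu, ?_⟩
    have hadj' : G'.Adj ⟨v, h⟩ ⟨u, hu⟩ := hadj
    rw [← hK]
    exact (SimpleGraph.ConnectedComponent.sound hadj'.reachable.symm)
  -- edges from S into a component
  set F : G'.ConnectedComponent → Finset (V × V) :=
    fun K => univ.filter (fun p => p.1 ∈ S ∧ p.2 ∈ W K ∧ G.Adj p.1 p.2) with hFdef
  set T : Finset (V × V) := univ.filter (fun p => p.1 ∈ S ∧ G.Adj p.1 p.2) with hTdef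
  -- total count of edges leaving S
  have hT : T.card = d * S.card := by
    have h1' : T.card = ∑ s ∈ S, (T.filter (fun p => p.1 = s)).card := by
      refine Finset.card_eq_sum_card_fiberwise (f := Prod.fst) ?_
      intro p hp
      exact ((Finset.mem_filter.mp hp).2).1
    rw [h1']
    have h2' : ∀ s ∈ S, (T.filter (fun p => p.1 = s)).card = d := by
      intro s hs
      rw [← hreg s, SimpleGraph.degree]
      refine Finset.card_bij (fun p _ => p.2) ?_ ?_ ?_
      · rintro p hp
        simp only [hTdef, Finset.mem_filter, Finset.mem_univ, true_and] at hp
        obtain ⟨⟨-, hadj⟩, h1⟩ := hp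
        rw [SimpleGraph.mem_neighborFinset]
        rwa [h1] at hadj
      · rintro p hp q hq h
        simp only [hTdef, Finset.mem_filter] at hp hq
        exact Prod.ext (hp.2.trans hq.2.symm) h
      · intro v hv
        rw [SimpleGraph.mem_neighborFinset] at hv
        exact ⟨(s, v), by simp [hTdef, hs, hv], rfl⟩
    rw [Finset.sum_congr rfl h2', Finset.sum_const, smul_eq_mul, mul_comm]
  -- the fibers are disjoint and contained in T
  have hsum : ∑ K, (F K).card ≤ d * S.card := by
    rw [← hT]
    have hdisj : ∀ K ∈ (univ : Finset G'.ConnectedComponent), ∀ K' ∈ univ, K ≠ K' →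
        Disjoint (F K) (F K') := by
      intro K _ K' _ hKK'
      rw [Finset.disjoint_left]
      rintro p hp hp'
      simp only [hFdef, Finset.mem_filter, Finset.mem_univ, true_and] at hp hp'
      obtain ⟨h, hK⟩ := hWmem.mp hp.2.1
      obtain ⟨h', hK'⟩ := hWmem.mp hp'.2.1
      exact hKK' (hK ▸ hK' ▸ rfl)
    rw [← Finset.card_biUnion hdisj]
    refine Finset.card_le_card ?_
    intro p hp
    rw [Finset.mem_biUnion] at hp
    obtain ⟨K, -, hp⟩ := hp
    simp only [hFdef, Finset.mem_filter, Finset.mem_univ, true_and] at hp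
    simp [hTdef, hp.1, hp.2.2]
  -- each fiber is even
  have heven : ∀ K, Even (F K).card := by
    intro K
    -- count fiberwise over the endpoint in W K
    have hA : (F K).card = ∑ v ∈ W K, (S ∩ G.neighborFinset v).card := by
      have h1' : (F K).card = ∑ v ∈ W K, ((F K).filter (fun p => p.2 = v)).card := by
        refine Finset.card_eq_sum_card_fiberwise (f := Prod.snd) ?_
        intro p hp
        exact ((Finset.mem_filter.mp hp).2).2.1
      rw [h1']
      refine Finset.sum_congr rfl ?_
      intro v hv
      refine Finset.card_bij (fun p _ => p.1) ?_ ?_ ?_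
      · rintro p hp
        simp only [hFdef, Finset.mem_filter, Finset.mem_univ, true_and] at hp
        obtain ⟨⟨hS, -, hadj⟩, h1⟩ := hp
        subst h1
        rw [Finset.mem_inter, SimpleGraph.mem_neighborFinset]
        exact ⟨hS, hadj.symm⟩
      · rintro p hp q hq h
        simp only [Finset.mem_filter] at hp hq
        exact Prod.ext h (hp.2.trans hq.2.symm)
      · intro s hs
        rw [Finset.mem_inter, SimpleGraph.mem_neighborFinset] at hs
        exact ⟨(s, v), by simp [hFdef, hs.1, hs.2.symm, hv], rfl⟩
    -- split degree of each v ∈ W K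
    have hB : ∀ v ∈ W K, (S ∩ G.neighborFinset v).card + (W K ∩ G.neighborFinset v).card = d := by
      intro v hv
      rw [← Finset.card_union_of_disjoint, ← Finset.union_inter_distrib_right]
      · have : (S ∪ W K) ∩ G.neighborFinset v = G.neighborFinset v := by
          refine Finset.inter_eq_right.mpr ?_
          intro u hu
          rw [SimpleGraph.mem_neighborFinset] at hu
          by_cases huS : u ∈ S
          · exact Finset.mem_union_left _ huS
          · exact Finset.mem_union_right _ (hclosed hv hu huS)
        rw [this, ← SimpleGraph.degree, hreg v]
      · exact Finset.disjoint_left.mpr (fun u hu hu' =>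
          hWS (Finset.mem_inter.mp hu').1 (Finset.mem_inter.mp hu).1)
    -- the internal sum is even (handshake on the induced subgraph on W K)
    have hC : Even (∑ v ∈ W K, (W K ∩ G.neighborFinset v).card) := by
      set H : SimpleGraph V :=
        { Adj := fun a c => a ∈ W K ∧ c ∈ W K ∧ G.Adj a c
          symm := ⟨by rintro a c ⟨h1, h2, h3⟩; exact ⟨h2, h1, h3.symm⟩⟩
          loopless := ⟨by rintro a ⟨-, -, h3⟩; exact G.loopless.irrefl a h3⟩ } with hHdef
      letI : DecidableRel H.Adj := fun a c => Classical.dec _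
      have hdeg : ∀ v, H.degree v = if v ∈ W K then (W K ∩ G.neighborFinset v).card else 0 := by
        intro v
        by_cases hv : v ∈ W K
        · rw [if_pos hv, SimpleGraph.degree]
          congr 1
          ext u
          simp only [SimpleGraph.mem_neighborFinset, hHdef, Finset.mem_inter, hv, true_and]
        · rw [if_neg hv]
          rw [SimpleGraph.degree, Finset.card_eq_zero]
          ext u
          simp only [SimpleGraph.mem_neighborFinset, Finset.notMem_empty, iff_false,
            hHdef]
          exact fun h => hv h.1
      have hhs := SimpleGraph.sum_degrees_eq_twice_card_edges H
      have : ∑ v ∈ W K, (W K ∩ G.neighborFinset v).card = ∑ v, H.degree v := by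
        rw [Finset.sum_congr rfl (fun v hv => (by rw [hdeg v, if_pos hv] :
          (W K ∩ G.neighborFinset v).card = H.degree v))]
        refine Finset.sum_subset (Finset.subset_univ _) ?_
        intro v _ hv
        rw [hdeg v, if_neg hv]
      rw [this, hhs]
      exact even_two_mul _
    -- combine parities
    have htot : (∑ v ∈ W K, (S ∩ G.neighborFinset v).card)
        + (∑ v ∈ W K, (W K ∩ G.neighborFinset v).card) = d * (W K).card := by
      rw [← Finset.sum_add_distrib, Finset.sum_congr rfl hB, Finset.sum_const, smul_eq_mul,
        mul_comm]
    rw [hA]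
    have hdtot : Even (d * (W K).card) := hdeven.mul_right _
    rw [← htot] at hdtot
    rcases Nat.even_add.mp hdtot with h
    exact h.mpr hC
  -- each fiber is nonempty
  have hpos : ∀ K, 1 ≤ (F K).card := by
    intro K
    rw [Nat.one_le_iff_ne_zero, Ne, Finset.card_eq_zero]
    intro hF0
    obtain ⟨⟨v, hv⟩, hK⟩ := K.exists_rep
    have hvW : v ∈ W K := hWmem.mpr ⟨hv, hK⟩
    -- the component is closed under all adjacency
    have hAclosed : ∀ ⦃x y : V⦄, x ∈ (↑(W K) : Set V) → G.Adj x y → y ∈ (↑(W K) : Set V) := by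
      intro x y hx hadj
      rw [Finset.mem_coe] at hx ⊢
      by_cases hyS : y ∈ S
      · exfalso
        have : (y, x) ∈ F K := by
          simp only [hFdef, Finset.mem_filter, Finset.mem_univ, true_and]
          exact ⟨hyS, hx, hadj.symm⟩
        rw [hF0] at this
        exact Finset.notMem_empty _ this
      · exact hclosed hx hadj hyS
    obtain ⟨s0, hs0⟩ := hSne
    obtain ⟨p⟩ := (hG.preconnected v s0)
    have : s0 ∈ (↑(W K) : Set V) := stmt7_walkClosed hAclosed p (by simpa using hvW)
    exact hWS (by simpa using this) hs0
  -- each fiber has at least 2 elements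
  have h2le : ∀ K, 2 ≤ (F K).card := by
    intro K
    obtain ⟨k, hk⟩ := heven K
    have := hpos K
    omega
  -- count components
  have hcard : Nat.card G'.ConnectedComponent = Fintype.card G'.ConnectedComponent :=
    Nat.card_eq_fintype_card
  have hlow : 2 * (b * S.card + 1) ≤ ∑ K, (F K).card := by
    calc 2 * (b * S.card + 1) ≤ 2 * Fintype.card G'.ConnectedComponent := by
          have := hcomp
          rw [hcard] at this
          omega
      _ = ∑ K : G'.ConnectedComponent, 2 := by rw [Finset.sum_const, Finset.card_univ,
            smul_eq_mul, mul_comm]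
      _ ≤ ∑ K, (F K).card := Finset.sum_le_sum (fun K _ => h2le K)
  have hds : d * S.card ≤ 2 * b * S.card := Nat.mul_le_mul_right _ h2
  have : 2 * (b * S.card + 1) ≤ d * S.card := le_trans hlow hsum
  have h2b : 2 * b * S.card = 2 * (b * S.card) := by ring
  omega
end

section
/- Let G be a connected d-regular graph with d ≥ b+2 for an integer b ≥ 1, and let S ⊆ V(G) be nonempty with c(G-S) ≥ b|S|+1. Then at least b+1 components H of G-S satisfy e(S,H) ≤ d - b. -/
open Finset SimpleGraph

namespace SimpleGraph

variable {V : Type*} {G : SimpleGraph V}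

noncomputable def ConnectedComponent.vertFinset [Finite V] {T : Set V}
    (c : (G.induce T).ConnectedComponent) : Finset V :=
  (Set.toFinite (Subtype.val '' c.supp)).toFinset

namespace ConnectedComponent

variable [Finite V] {T : Set V}

@[simp]
theorem coe_vertFinset (c : (G.induce T).ConnectedComponent) :
    (c.vertFinset : Set V) = Subtype.val '' c.supp :=
  Set.Finite.coe_toFinset _

theorem vertFinset_injective :
    Function.Injective (vertFinset : (G.induce T).ConnectedComponent → Finset V) := by
  intro c c' h
  apply supp_injective
  apply Set.image_injective.mpr Subtype.val_injective
  rw [← coe_vertFinset, ← coe_vertFinset, h]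

theorem disjoint_vertFinset {c c' : (G.induce T).ConnectedComponent} (h : c ≠ c') :
    Disjoint c.vertFinset c'.vertFinset := by
  rw [← Finset.disjoint_coe, coe_vertFinset, coe_vertFinset]
  exact Set.disjoint_image_of_injective Subtype.val_injective
    (pairwise_disjoint_supp_connectedComponent _ h)

theorem isCompOf_vertFinset {S : Finset V} (c : (G.induce (↑S)ᶜ).ConnectedComponent) :
    IsCompOf G S c.vertFinset := by
  refine ⟨?_, ?_, ?_, ?_⟩
  · rw [← Finset.coe_nonempty, coe_vertFinset]
    exact c.nonempty_supp.image _
  · rw [← Finset.disjoint_coe, coe_vertFinset, Set.disjoint_left]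
    rintro _ ⟨v, -, rfl⟩
    exact v.2
  · rw [coe_vertFinset]
    let f : c.toSimpleGraph →g G.induce (Subtype.val '' c.supp) :=
      { toFun := fun v => ⟨v.1.1, v.1, v.2, rfl⟩, map_rel' := id }
    refine c.connected_toSimpleGraph.map f ?_
    rintro ⟨_, v, hv, rfl⟩
    exact ⟨⟨v, hv⟩, rfl⟩
  · intro x hx y hy hyS hxy
    rw [← Finset.mem_coe, coe_vertFinset] at hx hy
    obtain ⟨x, hx, rfl⟩ := hx
    have hxy' : (G.induce (↑S)ᶜ).Adj x ⟨y, hyS⟩ := hxy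
    exact hy ⟨⟨y, hyS⟩, c.mem_supp_of_adj_mem_supp hx hxy', rfl⟩

end ConnectedComponent

end SimpleGraph

section EdgeCount

variable {V : Type*} [DecidableEq V] {G : SimpleGraph V} [DecidableRel G.Adj]

theorem IsCompOf.eSH_pos {S H : Finset V} (hH : IsCompOf G S H) (hG : G.Connected)
    (hS : S.Nonempty) : 0 < eSH G S H := by
  obtain ⟨⟨x, hx⟩, hHS, -, hclosed⟩ := hH
  obtain ⟨s, hs⟩ := hS
  obtain ⟨⟨⟨a, t⟩, hat⟩, -, ha, ht⟩ := (hG.preconnected x s).some.exists_boundary_dart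
    (H : Set V) hx (disjoint_right.mp hHS hs)
  have htS : t ∈ S := by
    by_contra htS
    exact hclosed a ha t ht htS hat
  exact card_pos.mpr ⟨(t, a), mem_filter.mpr ⟨mem_product.mpr ⟨htS, ha⟩, hat.symm⟩⟩

theorem sum_eSH_le_sum_degree [Fintype V] {ι : Type*} (s : Finset ι) (S : Finset V)
    {H : ι → Finset V} (hH : (s : Set ι).PairwiseDisjoint H) :
    ∑ i ∈ s, eSH G S (H i) ≤ ∑ v ∈ S, G.degree v := by
  calc ∑ i ∈ s, eSH G S (H i)
      = #((s.biUnion fun i => S ×ˢ H i).filter fun p => G.Adj p.1 p.2) := by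
        rw [filter_biUnion, card_biUnion]
        · rfl
        · intro i hi j hj hij
          exact disjoint_filter_filter (disjoint_product.mpr (Or.inr (hH hi hj hij)))
    _ ≤ #((S ×ˢ univ).filter fun p => G.Adj p.1 p.2) :=
        card_le_card (filter_subset_filter _ (biUnion_subset.mpr fun _ _ =>
          product_subset_product_right (subset_univ _)))
    _ = ∑ v ∈ S, G.degree v := by
        rw [card_filter, sum_product]
        refine sum_congr rfl fun v _ => ?_
        rw [← card_neighborFinset_eq_degree, neighborFinset_eq_filter, card_filter]

end EdgeCount

theorem Finset.lt_card_filter_le_sub_of_sum_le {ι : Type*} (s : Finset ι) (f : ι → ℕ)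
    {b d n : ℕ} (hb : 1 ≤ b) (hpos : ∀ i ∈ s, 0 < f i) (hsum : ∑ i ∈ s, f i ≤ d * n)
    (hcard : b * n < #s) : b < #{i ∈ s | f i ≤ d - b} := by
  by_contra! hk
  have hsmall : #{i ∈ s | f i ≤ d - b} ≤ ∑ i ∈ s with f i ≤ d - b, f i := by
    simpa using card_nsmul_le_sum _ f 1 fun i hi => hpos i (mem_filter.mp hi).1
  have hlarge : #{i ∈ s | ¬ f i ≤ d - b} * (d - b + 1) ≤ ∑ i ∈ s with ¬ f i ≤ d - b, f i := by
    simpa using card_nsmul_le_sum _ f (d - b + 1) fun i hi => by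
      have := (mem_filter.mp hi).2
      omega
  have hsplit := sum_filter_add_sum_filter_not s (f · ≤ d - b) f
  have hcount := card_filter_add_card_filter_not (s := s) (f · ≤ d - b)
  set k := #{i ∈ s | f i ≤ d - b}
  set m := #{i ∈ s | ¬ f i ≤ d - b}
  set t := d - b
  have htotal : k + m * (t + 1) ≤ d * n := by linarith
  have hd : d ≤ b + t := by omega
  rw [← hcount] at hcard
  clear_value k m t
  obtain ⟨b, rfl⟩ : ∃ b', b = b' + 1 := ⟨b - 1, by omega⟩
  rcases n with _ | n
  · nlinarith
  -- `(b + 1) * (n + 1) + 1 ≤ k + m`, times `t + 1`, leaves `b * n * t + 1 ≤ 0`.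
  · nlinarith [Nat.mul_le_mul_right (n + 1) hd, Nat.mul_le_mul_right t hk,
      Nat.mul_le_mul_right (t + 1) hcard, Nat.zero_le (b * n * t)]

open SimpleGraph.ConnectedComponent in
theorem stmt9_general {V : Type*} [Fintype V] [DecidableEq V]
    (G : SimpleGraph V) [DecidableRel G.Adj] (d b : ℕ) (hb : 1 ≤ b)
    (hG : G.Connected) (hreg : G.IsRegularOfDegree d)
    (S : Finset V) (hS : S.Nonempty)
    (hcut : Nat.card (G.induce ((↑S)ᶜ : Set V)).ConnectedComponent ≥ b * S.card + 1) :
    ∃ 𝒞 : Finset (Finset V), b + 1 ≤ 𝒞.card ∧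
      ∀ H ∈ 𝒞, IsCompOf G S H ∧ eSH G S H ≤ d - b := by
  let _ : Fintype (G.induce (↑S)ᶜ).ConnectedComponent := Fintype.ofFinite _
  let e (c : (G.induce (↑S)ᶜ).ConnectedComponent) : ℕ := eSH G S c.vertFinset
  have hsum : ∑ c, e c ≤ d * #S :=
    calc _ ≤ ∑ v ∈ S, G.degree v :=
          sum_eSH_le_sum_degree _ S fun _ _ _ _ => disjoint_vertFinset
      _ = d * #S := by simp [hreg.degree_eq, mul_comm]
  have hmany : b < #{c | e c ≤ d - b} :=
    univ.lt_card_filter_le_sub_of_sum_le e hb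
      (fun c _ => (isCompOf_vertFinset c).eSH_pos hG hS) hsum
      (by rw [card_univ, ← Nat.card_eq_fintype_card]; omega)
  refine ⟨Finset.image vertFinset {c | e c ≤ d - b}, ?_, ?_⟩
  · rwa [card_image_of_injective _ vertFinset_injective]
  · simp only [mem_image, mem_filter_univ]
    rintro _ ⟨c, hc, rfl⟩
    exact ⟨isCompOf_vertFinset c, hc⟩

theorem stmt9 {V : Type*} [Fintype V] [DecidableEq V]
    (G : SimpleGraph V) [DecidableRel G.Adj] (d b : ℕ) (hb : 1 ≤ b) (hdb : b + 2 ≤ d)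
    (hG : G.Connected) (hreg : G.IsRegularOfDegree d)
    (S : Finset V) (hS : S.Nonempty)
    (hcut : Nat.card (G.induce ((↑S)ᶜ : Set V)).ConnectedComponent ≥ b * S.card + 1) :
    ∃ 𝒞 : Finset (Finset V), b + 1 ≤ 𝒞.card ∧
      ∀ H ∈ 𝒞, IsCompOf G S H ∧ eSH G S H ≤ d - b :=
  stmt9_general G d b hb hG hreg S hS hcut
end

section
/- Let G be a connected d-regular graph with d ≥ b+2, S ⊆ V(G) nonempty, and H a component of G-S with e(S,H) ≤ d-b. If ρ(H) ≤ (d-2+√(d²+4b+4))/2 (where d and b have the same parity), then |V(H)| ≤ d+2; moreover if d and |V(H)| have the same parity then |V(H)| = d+2, and otherwise |V(H)| = d+1. -/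
private lemma stmt18_num_contra (D B M P e μ s : ℝ) (h1 : P + e = D*M) (h2 : e ≤ D - B)
    (h3 : D + 3 ≤ M) (h4 : B + 2 ≤ D) (h5 : 1 ≤ B) (h6 : 0 < M) (h7 : P / M ≤ μ)
    (h8 : μ ≤ (D - 2 + s)/2) (h9 : 0 ≤ s) (h10 : s^2 = D^2 + 4*B + 4) : False := by
  have h7' : P ≤ M * μ := by
    rw [div_le_iff₀ h6] at h7
    linarith
  have hMs : M * (D + 2) - 2 * (D - B) ≤ M * s := by
    have h2mu : 2 * (M * μ) ≤ M * (D - 2 + s) := by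
      have := mul_le_mul_of_nonneg_left h8 (le_of_lt h6)
      nlinarith
    nlinarith
  have hR0 : (0:ℝ) ≤ M * (D + 2) - 2 * (D - B) := by nlinarith
  have hsq : (M * (D + 2) - 2 * (D - B))^2 ≤ (M * s)^2 := by
    have := mul_self_le_mul_self hR0 hMs
    nlinarith
  have hsq' : (M * (D + 2) - 2 * (D - B))^2 ≤ M^2 * (D^2 + 4*B + 4) := by
    calc _ ≤ (M * s)^2 := hsq
      _ = M^2 * s^2 := by ring
      _ = _ := by rw [h10]
  have hkey : (0:ℝ) < (D - B) * (M * (M - (D + 2)) + (D - B)) := by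
    apply mul_pos (by linarith)
    nlinarith
  nlinarith [hsq', hkey]

theorem stmt18 {V : Type*} [Fintype V] [DecidableEq V]
    (G : SimpleGraph V) [DecidableRel G.Adj] (d b : ℕ) (hb : 1 ≤ b) (hdb : b + 2 ≤ d)
    (hpar : d % 2 = b % 2)
    (hG : G.Connected) (hreg : G.IsRegularOfDegree d)
    (S H : Finset V) (hS : S.Nonempty) (hH : IsCompOf G S H)
    (he : eSH G S H ≤ d - b)
    (hρ : ∀ μ : ℝ,
      HasEig (fun a b : (H : Set V) => if G.Adj a.1 b.1 then (1 : ℝ) else 0) μ →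
        μ ≤ ((d : ℝ) - 2 + Real.sqrt ((d : ℝ) ^ 2 + 4 * b + 4)) / 2) :
    H.card ≤ d + 2 ∧ (H.card % 2 = d % 2 → H.card = d + 2) ∧
      (H.card % 2 ≠ d % 2 → H.card = d + 1) := by
  classical
  obtain ⟨hHne, hdisj, hconn, hcomp⟩ := hH
  set m := H.card with hm
  have hm1 : 1 ≤ m := Finset.card_pos.2 hHne
  -- degree decomposition for vertices of H
  have hdeg : ∀ v ∈ H, (H.filter fun u => G.Adj v u).card +
      (S.filter fun u => G.Adj v u).card = d := by
    intro v hv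
    have h1 : (H.filter fun u => G.Adj v u) ∪ (S.filter fun u => G.Adj v u)
        = G.neighborFinset v := by
      ext y
      simp only [Finset.mem_union, Finset.mem_filter, SimpleGraph.mem_neighborFinset]
      constructor
      · rintro (⟨_, h⟩ | ⟨_, h⟩) <;> exact h
      · intro h
        by_cases hyH : y ∈ H
        · exact Or.inl ⟨hyH, h⟩
        by_cases hyS : y ∈ S
        · exact Or.inr ⟨hyS, h⟩
        · exact absurd h (hcomp v hv y hyH hyS)
    have h2 : Disjoint (H.filter fun u => G.Adj v u) (S.filter fun u => G.Adj v u) :=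
      hdisj.mono (Finset.filter_subset _ _) (Finset.filter_subset _ _)
    rw [← Finset.card_union_of_disjoint h2, h1]
    exact hreg v
  have hES : ∑ v ∈ H, (S.filter fun u => G.Adj v u).card = eSH G S H := by
    unfold eSH
    rw [Finset.card_filter, Finset.sum_product, Finset.sum_comm]
    refine Finset.sum_congr rfl fun v hv => ?_
    rw [Finset.card_filter]
    refine Finset.sum_congr rfl fun s hs => ?_
    simp [G.adj_comm]
  set P := ((H ×ˢ H).filter fun p => G.Adj p.1 p.2).card with hPdef
  have hPsum : ∑ v ∈ H, (H.filter fun u => G.Adj v u).card = P := by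
    rw [hPdef, Finset.card_filter, Finset.sum_product]
    refine Finset.sum_congr rfl fun v hv => ?_
    rw [Finset.card_filter]
  have hP : P + eSH G S H = d * m := by
    rw [← hPsum, ← hES, ← Finset.sum_add_distrib]
    rw [Finset.sum_congr rfl hdeg, Finset.sum_const, smul_eq_mul, mul_comm]
  have hfH : ∀ v ∈ H, (H.filter fun u => G.Adj v u).card ≤ m - 1 := by
    intro v hv
    have hsub : (H.filter fun u => G.Adj v u) ⊆ H.erase v := by
      intro u hu
      rw [Finset.mem_filter] at hu
      exact Finset.mem_erase.2 ⟨fun h => G.loopless.irrefl v (h ▸ hu.2), hu.1⟩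
    calc (H.filter fun u => G.Adj v u).card ≤ (H.erase v).card := Finset.card_le_card hsub
      _ = m - 1 := by rw [Finset.card_erase_of_mem hv]
  -- lower bound : d + 1 ≤ m
  have hlow : d + 1 ≤ m := by
    by_contra hcon
    push_neg at hcon
    have hmd : m ≤ d := by omega
    have hfS : ∀ v ∈ H, d + 1 - m ≤ (S.filter fun u => G.Adj v u).card := by
      intro v hv
      have h1 := hdeg v hv
      have h2 := hfH v hv
      omega
    have hsum : m * (d + 1 - m) ≤ eSH G S H := by
      rw [← hES]
      calc m * (d + 1 - m) = ∑ _v ∈ H, (d + 1 - m) := by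
            rw [Finset.sum_const, smul_eq_mul]
        _ ≤ _ := Finset.sum_le_sum hfS
    obtain ⟨v0, hv0⟩ := hHne
    have hfS0 : (S.filter fun u => G.Adj v0 u).card ≤ eSH G S H := by
      rw [← hES]
      exact Finset.single_le_sum (f := fun v => (S.filter fun u => G.Adj v u).card) (fun i _ => Nat.zero_le _) hv0
    have hfH0 := hdeg v0 hv0
    have hfH0' := hfH v0 hv0
    have hbm : b + 1 ≤ m := by omega
    have hbd : b ≤ d := by omega
    have hmd1 : m ≤ d + 1 := by omega
    zify [hbd, hmd1] at hsum he hbm hmd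
    nlinarith [mul_nonneg (by linarith : (0:ℤ) ≤ (m:ℤ) - b - 1)
        (by linarith : (0:ℤ) ≤ (d:ℤ) - m),
      mul_nonneg (by positivity : (0:ℤ) ≤ (b:ℤ))
        (by linarith : (0:ℤ) ≤ (d:ℤ) - m)]
  -- upper bound : m ≤ d + 2, via the spectral hypothesis
  have hupp : m ≤ d + 2 := by
    by_contra hcon
    push_neg at hcon
    have hm3 : d + 3 ≤ m := hcon
    set A : Matrix (H : Set V) (H : Set V) ℝ :=
      fun a b => if G.Adj a.1 b.1 then (1 : ℝ) else 0 with hAdef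
    have hherm : A.IsHermitian := by
      ext i j
      simp only [Matrix.conjTranspose_apply, hAdef, star_trivial]
      exact if_congr (G.adj_comm _ _) rfl rfl
    have hsymm := Matrix.isHermitian_iff_isSymmetric.1 hherm
    obtain ⟨x0, hx0⟩ := hHne
    haveI : Nonempty (H : Set V) := ⟨⟨x0, Finset.mem_coe.2 hx0⟩⟩
    haveI : Nontrivial (EuclideanSpace ℝ (H : Set V)) := by infer_instance
    set T := Matrix.toEuclideanLin A with hT
    have heig := hsymm.hasEigenvalue_iSup_of_finiteDimensional
    set μ : ℝ := (⨆ x : {x : EuclideanSpace ℝ (H : Set V) // x ≠ 0},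
        RCLike.re (inner ℝ (T x) (x : EuclideanSpace ℝ (H : Set V)) : ℝ) /
          ‖(x : EuclideanSpace ℝ (H : Set V))‖ ^ 2) with hμ
    obtain ⟨v, hveig⟩ := heig.exists_hasEigenvector
    have hveq : T v = μ • v := Module.End.mem_eigenspace_iff.1 hveig.1
    have hHasEig : HasEig A μ := ⟨WithLp.ofLp v,
      fun h => hveig.2 (by simpa using congrArg (WithLp.toLp 2) h),
      by simpa [hT] using congrArg WithLp.ofLp hveq⟩
    have hub := hρ μ hHasEig
    -- bounded above
    have hbdd : BddAbove (Set.range fun x : {x : EuclideanSpace ℝ (H : Set V) // x ≠ 0} =>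
        RCLike.re (inner ℝ (T x) (x : EuclideanSpace ℝ (H : Set V)) : ℝ) /
          ‖(x : EuclideanSpace ℝ (H : Set V))‖ ^ 2) := by
      refine ⟨‖LinearMap.toContinuousLinearMap T‖, ?_⟩
      rintro r ⟨x, rfl⟩
      have hxn : (0:ℝ) < ‖(x : EuclideanSpace ℝ (H : Set V))‖ :=
        norm_pos_iff.2 x.2
      rw [div_le_iff₀ (by positivity)]
      calc RCLike.re (inner ℝ (T x) (x : EuclideanSpace ℝ (H : Set V)) : ℝ)
          ≤ ‖T x‖ * ‖(x : EuclideanSpace ℝ (H : Set V))‖ := by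
            rw [RCLike.re_to_real]
            exact real_inner_le_norm _ _
        _ ≤ (‖LinearMap.toContinuousLinearMap T‖ * ‖(x : EuclideanSpace ℝ (H : Set V))‖)
              * ‖(x : EuclideanSpace ℝ (H : Set V))‖ := by
            gcongr
            exact (LinearMap.toContinuousLinearMap T).le_opNorm _
        _ = ‖LinearMap.toContinuousLinearMap T‖ *
              ‖(x : EuclideanSpace ℝ (H : Set V))‖ ^ 2 := by ring
    -- the all-ones vector
    set one : EuclideanSpace ℝ (H : Set V) := (WithLp.equiv 2 _).symm (fun _ => 1) with honedef
    have hone : one ≠ 0 := by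
      intro h
      have h2 : (1 : ℝ) = 0 := by
        have := congrArg (fun x : EuclideanSpace ℝ (H : Set V) => x (Classical.arbitrary _)) h
        simpa [honedef] using this
      exact one_ne_zero h2
    have hcard : (Fintype.card (H : Set V) : ℝ) = (m : ℝ) := by
      rw [hm]
      norm_cast
      simp [Finset.coe_sort_coe]
    have hinner : (inner ℝ (T one) one : ℝ) = (P : ℝ) := by
      have h1 : (inner ℝ (T one) one : ℝ)
          = ∑ i : (H : Set V), ∑ j : (H : Set V), A i j := by
        rw [PiLp.inner_apply]
        refine Finset.sum_congr rfl fun i _ => ?_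
        have hTone : T one i = ∑ j : (H : Set V), A i j * one j := rfl
        simp only [RCLike.inner_apply, starRingEnd_apply, star_trivial, hTone]
        show 1 * (∑ j : (H : Set V), A i j * 1) = ∑ j : (H : Set V), A i j
        simp only [mul_one, one_mul]
      rw [h1]
      have h2 : ∑ i : (H : Set V), ∑ j : (H : Set V), A i j
          = ∑ i ∈ H, ∑ j ∈ H, (if G.Adj i j then (1:ℝ) else 0) := by
        rw [← Finset.sum_finset_coe
          (fun i => ∑ j ∈ H, (if G.Adj i j then (1:ℝ) else 0)) H]
        refine Finset.sum_congr rfl fun i _ => ?_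
        rw [← Finset.sum_finset_coe (fun j => if G.Adj (i : V) j then (1:ℝ) else 0) H]
      rw [h2, hPdef, Finset.card_filter]
      push_cast
      rw [Finset.sum_product]
    have hnorm : ‖one‖ ^ 2 = (m : ℝ) := by
      rw [← real_inner_self_eq_norm_sq]
      rw [PiLp.inner_apply]
      simp only [RCLike.inner_apply, starRingEnd_apply, star_trivial]
      have : ∀ i : (H : Set V), one i * one i = 1 := fun i => by
        have : one i = 1 := rfl
        rw [this, mul_one]
      rw [Finset.sum_congr rfl fun i _ => this i, Finset.sum_const, Finset.card_univ,
        nsmul_eq_mul, mul_one, hcard]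
    have hmu_lb : (P : ℝ) / (m : ℝ) ≤ μ := by
      have h : RCLike.re (inner ℝ (T one) one : ℝ) / ‖one‖ ^ 2 ≤ μ :=
        le_ciSup hbdd (⟨one, hone⟩ : {x : EuclideanSpace ℝ (H : Set V) // x ≠ 0})
      rwa [RCLike.re_to_real, hinner, hnorm] at h
    -- numeric contradiction
    have hmR : (0:ℝ) < (m:ℝ) := Nat.cast_pos.2 (by omega)
    have hPR : (P : ℝ) + (eSH G S H : ℝ) = (d : ℝ) * (m : ℝ) := by exact_mod_cast hP
    have heR : (eSH G S H : ℝ) ≤ (d : ℝ) - (b : ℝ) := by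
      have : (eSH G S H : ℝ) ≤ ((d - b : ℕ) : ℝ) := by exact_mod_cast he
      rwa [Nat.cast_sub (by omega)] at this
    refine stmt18_num_contra (d:ℝ) (b:ℝ) (m:ℝ) (P:ℝ) (eSH G S H : ℝ) μ
      (Real.sqrt ((d : ℝ) ^ 2 + 4 * b + 4)) hPR heR ?_ ?_ ?_ hmR hmu_lb hub
      (Real.sqrt_nonneg _) (Real.sq_sqrt (by positivity))
    · exact_mod_cast hm3
    · exact_mod_cast hdb
    · exact_mod_cast hb
  refine ⟨hupp, fun h => by omega, fun h => by omega⟩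
end
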